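/- Let η > 0, τ ∈ (0,1], κ ∈ (0,1], Θ̂ ≥ 0, and let x⋆, y, x′, x″, y′, e be vectors in ℝ^p and Δ′ ≥ 0 a real number. With γ = 1/(4η) and c₁ = 4η/τ, define Q := ‖y − x⋆‖² + (1 − γη)‖y − x′‖² + (2η/(c₁τ))‖x′ − y′‖² + (2η(1 − τ)/τ)⟨e, x⋆ − y′⟩ and L := Q + (Θ̂η²/κ)(12/τ² + 10)‖x′ − x″‖² + ((1 − κ)η²/κ)(12/τ² + 10)Δ′ + (8(1 − τ)²η²/τ²)‖e‖². Then L ≥ (3/4)‖y − x⋆‖². (Lower bound (6.13) of Lemma C.5.) -/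

import Mathlib

open scoped RealInnerProductSpace

/-- The intermediate function `Q` of the biased variance-reduced FRBS analysis,
evaluated at `γ = 1/(4η)` and `c₁ = 4η/τ`. -/
noncomputable def Qfun {p : ℕ} (η τ : ℝ)
    (xstar y x' y' e : EuclideanSpace ℝ (Fin p)) : ℝ :=
  ‖y - xstar‖ ^ 2 + (1 - (1 / (4 * η)) * η) * ‖y - x'‖ ^ 2
    + (2 * η / ((4 * η / τ) * τ)) * ‖x' - y'‖ ^ 2
    + (2 * η * (1 - τ) / τ) * ⟪e, xstar - y'⟫

/-- The Lyapunov function `L` of the biased variance-reduced FRBS analysis. -/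
noncomputable def Lfun {p : ℕ} (η τ κ Θhat : ℝ)
    (xstar y x' x'' y' e : EuclideanSpace ℝ (Fin p)) (Δ' : ℝ) : ℝ :=
  Qfun η τ xstar y x' y' e
    + (Θhat * η ^ 2 / κ) * (12 / τ ^ 2 + 10) * ‖x' - x''‖ ^ 2
    + ((1 - κ) * η ^ 2 / κ) * (12 / τ ^ 2 + 10) * Δ'
    + (8 * (1 - τ) ^ 2 * η ^ 2 / τ ^ 2) * ‖e‖ ^ 2

lemma quad_aux (a b c E s : ℝ) :
    1/4*a^2 + 3/4*b^2 + 1/2*c^2 - s * (E * (a + b + c)) + 2*s^2*E^2 ≥ 0 := by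
  nlinarith [sq_nonneg (a - 2 * s * E), sq_nonneg (3 * b - 2 * s * E),
    sq_nonneg (c - s * E), sq_nonneg (s * E)]

/-- Lower bound (6.13) of Lemma C.5 on the Lyapunov function. -/
theorem stmt_15 {p : ℕ} (η τ κ Θhat : ℝ) (hη : 0 < η)
    (hτ0 : 0 < τ) (hτ1 : τ ≤ 1) (hκ0 : 0 < κ) (hκ1 : κ ≤ 1) (hΘhat : 0 ≤ Θhat)
    (xstar y x' x'' y' e : EuclideanSpace ℝ (Fin p)) (Δ' : ℝ) (hΔ' : 0 ≤ Δ') :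
    Lfun η τ κ Θhat xstar y x' x'' y' e Δ' ≥ (3 / 4) * ‖y - xstar‖ ^ 2 := by
  unfold Lfun Qfun
  have hη' : η ≠ 0 := ne_of_gt hη
  have hτ' : τ ≠ 0 := ne_of_gt hτ0
  have h1 : 1 - (1 / (4 * η)) * η = 3 / 4 := by field_simp; ring
  have h2 : 2 * η / ((4 * η / τ) * τ) = 1 / 2 := by field_simp; ring
  set s : ℝ := 2 * η * (1 - τ) / τ with hs
  have hs0 : 0 ≤ s := by
    apply div_nonneg _ hτ0.le
    nlinarith
  have h3 : 8 * (1 - τ) ^ 2 * η ^ 2 / τ ^ 2 = 2 * s ^ 2 := by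
    rw [hs]; field_simp; ring
  rw [h1, h2, h3]
  set a := ‖y - xstar‖
  set b := ‖y - x'‖
  set c := ‖x' - y'‖
  set E := ‖e‖
  have ha : 0 ≤ a := norm_nonneg _
  have hb : 0 ≤ b := norm_nonneg _
  have hc : 0 ≤ c := norm_nonneg _
  have hE : 0 ≤ E := norm_nonneg _
  have htri : ‖xstar - y'‖ ≤ a + b + c := by
    have : xstar - y' = -(y - xstar) + (y - x') + (x' - y') := by abel
    rw [this]
    calc ‖-(y - xstar) + (y - x') + (x' - y')‖
        ≤ ‖-(y - xstar) + (y - x')‖ + ‖x' - y'‖ := norm_add_le _ _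
      _ ≤ ‖-(y - xstar)‖ + ‖y - x'‖ + ‖x' - y'‖ := by
          gcongr; exact norm_add_le _ _
      _ = a + b + c := by rw [norm_neg]
  have hinner : ⟪e, xstar - y'⟫ ≥ -(E * (a + b + c)) := by
    have h := abs_real_inner_le_norm e (xstar - y')
    have := abs_le.mp h
    nlinarith [this.1, mul_le_mul_of_nonneg_left htri hE]
  have hkey : s * ⟪e, xstar - y'⟫ ≥ -(s * (E * (a + b + c))) := by
    nlinarith [mul_le_mul_of_nonneg_left hinner hs0]
  have hterm1 : 0 ≤ (Θhat * η ^ 2 / κ) * (12 / τ ^ 2 + 10) * ‖x' - x''‖ ^ 2 := by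
    have : 0 ≤ Θhat * η ^ 2 / κ := by positivity
    have h10 : (0:ℝ) ≤ 12 / τ ^ 2 + 10 := by positivity
    positivity
  have hterm2 : 0 ≤ ((1 - κ) * η ^ 2 / κ) * (12 / τ ^ 2 + 10) * Δ' := by
    have h0 : 0 ≤ (1 - κ) * η ^ 2 / κ := by
      apply div_nonneg _ hκ0.le; nlinarith
    have h10 : (0:ℝ) ≤ 12 / τ ^ 2 + 10 := by positivity
    positivity
  linarith [hkey, hterm1, hterm2, quad_aux a b c E s]
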